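/- Substitution lemma for FG: if ∅ ⊢ v̄ : t̄ for values v̄, and x̄:ū ⊢ e : u with t̄ <: ū componentwise, then ∅ ⊢ e[x̄ := v̄] : t for some type t with t <: u. -/

import Mathlib

set_option linter.unusedVariables false

namespace FGPaper

/-! ## Featherweight Go (FG) -/

/-- FG type names: structure names or interface names. -/
inductive TypeName where
  | strct (s : String)
  | iface (s : String)
deriving DecidableEq

/-- FG method signature `(x̄ t̄) t`. -/
structure MethodSig where
  params : List (String × TypeName)
  ret : TypeName
deriving DecidableEq

/-- FG method specification `m M`. -/
structure MethodSpec where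
  name : String
  sig : MethodSig
deriving DecidableEq

/-- FG expressions. -/
inductive Expr where
  | var (x : String)
  | call (e : Expr) (m : String) (args : List Expr)
  | lit (t : TypeName) (args : List Expr)
  | select (e : Expr) (f : String)
  | assert (e : Expr) (t : TypeName)

/-- An FG program, presented abstractly by its sequence of declarations:
`declared` says a type name is declared, `fields` gives the fields of a
declared structure, `methods` gives the method specifications of a type
(declared methods for structures, interface members for interfaces), and
`body` gives, for a structure name and method name, the receiver variable,
parameters, return type, and body of the declared method. -/
structure FGProgram where
  declared : TypeName → Prop
  fields : String → Option (List (String × TypeName))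
  methods : TypeName → Set MethodSpec
  body : String → String → Option (String × List (String × TypeName) × TypeName × Expr)

/-- The FG implements relation `t <: u`: a structure type implements itself,
and `t <: t_I` whenever `methods(t) ⊇ methods(t_I)`. -/
inductive Imp (methods : TypeName → Set MethodSpec) : TypeName → TypeName → Prop
  | strct (s : String) : Imp methods (.strct s) (.strct s)
  | iface {t : TypeName} {i : String} :
      methods (.iface i) ⊆ methods t → Imp methods t (.iface i)

/-- FG values: structure literals all of whose fields are values. -/
inductive IsValue : Expr → Prop
  | lit {s : String} {args : List Expr} :
      (∀ e ∈ args, IsValue e) → IsValue (.lit (.strct s) args)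

/-- `type(v)` for a structure literal. -/
def typeOf : Expr → Option TypeName
  | .lit t _ => some t
  | _ => none

/-- Simultaneous substitution map `[x̄ := v̄]`. -/
def mkSubst (xs : List String) (vs : List Expr) : String → Option Expr :=
  fun x => (xs.zip vs).lookup x

/-- Apply a substitution of expressions for variables. -/
def substE (σ : String → Option Expr) : Expr → Expr
  | .var x => (σ x).getD (.var x)
  | .call e m args => .call (substE σ e) m (args.attach.map fun ⟨a, ha⟩ => substE σ a)
  | .lit t args => .lit t (args.attach.map fun ⟨a, ha⟩ => substE σ a)
  | .select e f => .select (substE σ e) f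
  | .assert e t => .assert (substE σ e) t

/-- Environment built from a list of variable/type bindings. -/
def mkCtx (l : List (String × TypeName)) : String → Option TypeName :=
  fun x => l.lookup x

/-- The FG typing judgment `Γ ⊢ e : t`. -/
inductive HasType (P : FGProgram) :
    (String → Option TypeName) → Expr → TypeName → Prop
  | var {Γ x t} : Γ x = some t → HasType P Γ (.var x) t
  | call {Γ e m args t params ret ts} :
      HasType P Γ e t →
      MethodSpec.mk m ⟨params, ret⟩ ∈ P.methods t →
      List.Forall₂ (HasType P Γ) args ts →
      List.Forall₂ (Imp P.methods) ts (params.map Prod.snd) →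
      HasType P Γ (.call e m args) ret
  | lit {Γ s args ts flds} :
      P.declared (.strct s) →
      P.fields s = some flds →
      List.Forall₂ (HasType P Γ) args ts →
      List.Forall₂ (Imp P.methods) ts (flds.map Prod.snd) →
      HasType P Γ (.lit (.strct s) args) (.strct s)
  | select {Γ e s flds f u} :
      HasType P Γ e (.strct s) →
      P.fields s = some flds →
      (f, u) ∈ flds →
      HasType P Γ (.select e f) u
  | assertI {Γ e i u} :
      P.declared (.iface i) →
      HasType P Γ e (.iface u) →
      HasType P Γ (.assert e (.iface i)) (.iface i)
  | assertS {Γ e s u} :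
      P.declared (.strct s) →
      HasType P Γ e (.iface u) →
      Imp P.methods (.strct s) (.iface u) →
      HasType P Γ (.assert e (.strct s)) (.strct s)
  | stupid {Γ e t s} :
      P.declared t →
      HasType P Γ e (.strct s) →
      HasType P Γ (.assert e t) t

/-- FG reduction `d ⟶ e` (with explicit congruence rules implementing the
left-to-right call-by-value evaluation contexts). -/
inductive Step (P : FGProgram) : Expr → Expr → Prop
  | field {s args flds f u v} {i : Nat} :
      (∀ e ∈ args, IsValue e) →
      P.fields s = some flds →
      flds[i]? = some (f, u) →
      args[i]? = some v →
      Step P (.select (.lit (.strct s) args) f) v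
  | call {s vargs m args x params ret e} :
      IsValue (.lit (.strct s) vargs) →
      (∀ a ∈ args, IsValue a) →
      P.body s m = some (x, params, ret, e) →
      Step P (.call (.lit (.strct s) vargs) m args)
        (substE (mkSubst (x :: params.map Prod.fst)
          (.lit (.strct s) vargs :: args)) e)
  | assert {v t tv} :
      IsValue v → typeOf v = some tv → Imp P.methods tv t →
      Step P (.assert v t) v
  | ctx_recv {e e' m args} :
      Step P e e' → Step P (.call e m args) (.call e' m args)
  | ctx_arg {v m vs a a' es} :
      IsValue v → (∀ e ∈ vs, IsValue e) → Step P a a' →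
      Step P (.call v m (vs ++ a :: es)) (.call v m (vs ++ a' :: es))
  | ctx_lit {t vs a a' es} :
      (∀ e ∈ vs, IsValue e) → Step P a a' →
      Step P (.lit t (vs ++ a :: es)) (.lit t (vs ++ a' :: es))
  | ctx_select {e e' f} : Step P e e' → Step P (.select e f) (.select e' f)
  | ctx_assert {e e' t} : Step P e e' → Step P (.assert e t) (.assert e' t)

/-- `d` panics: `d = E[v.(t)]` with `¬ type(v) <: t`. -/
inductive Panics (P : FGProgram) : Expr → Prop
  | cast {v t tv} :
      IsValue v → typeOf v = some tv → ¬ Imp P.methods tv t →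
      Panics P (.assert v t)
  | lit {t vs a es} :
      (∀ e ∈ vs, IsValue e) → Panics P a → Panics P (.lit t (vs ++ a :: es))
  | recv {e m args} : Panics P e → Panics P (.call e m args)
  | arg {v m vs a es} :
      IsValue v → (∀ e ∈ vs, IsValue e) → Panics P a →
      Panics P (.call v m (vs ++ a :: es))
  | select {e f} : Panics P e → Panics P (.select e f)
  | assert {e t} : Panics P e → Panics P (.assert e t)

/-- Well-formedness of an FG program. -/
structure FGProgram.Wf (P : FGProgram) : Prop where
  fields_declared : ∀ s flds, P.fields s = some flds → ∀ p ∈ flds, P.declared p.2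
  fields_exist : ∀ s, P.declared (.strct s) → ∃ flds, P.fields s = some flds
  methods_declared : ∀ t spec, spec ∈ P.methods t →
      P.declared spec.sig.ret ∧ ∀ p ∈ spec.sig.params, P.declared p.2
  methods_unique : ∀ t m sig₁ sig₂, MethodSpec.mk m sig₁ ∈ P.methods t →
      MethodSpec.mk m sig₂ ∈ P.methods t → sig₁ = sig₂
  body_methods : ∀ s m x params ret e, P.body s m = some (x, params, ret, e) →
      MethodSpec.mk m ⟨params, ret⟩ ∈ P.methods (.strct s)
  methods_body : ∀ s m sig, MethodSpec.mk m sig ∈ P.methods (.strct s) →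
      ∃ x e, P.body s m = some (x, sig.params, sig.ret, e)
  body_typed : ∀ s m x params ret e, P.body s m = some (x, params, ret, e) →
      ∃ t, HasType P (mkCtx ((x, TypeName.strct s) :: params)) e t ∧
        Imp P.methods t ret

end FGPaper

/-! ## Featherweight Generic Go (FGG) -/

namespace FGPaper

/-- FGG types: type parameters or named types `t(τ̄)`. -/
inductive GType where
  | tvar (a : String)
  | named (t : TypeName) (args : List GType)

/-- FGG method signature `(Ψ)(x̄ τ̄) τ`. -/
structure GMethodSig where
  tformals : List (String × GType)
  params : List (String × GType)
  ret : GType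

/-- FGG method specification. -/
structure GMethodSpec where
  name : String
  sig : GMethodSig

/-- FGG expressions. -/
inductive GExpr where
  | var (x : String)
  | call (e : GExpr) (m : String) (targs : List GType) (args : List GExpr)
  | lit (τ : GType) (args : List GExpr)
  | select (e : GExpr) (f : String)
  | assert (e : GExpr) (τ : GType)

/-- Type substitution map `(ᾱ := τ̄)`. -/
def mkTSubst (as : List String) (ts : List GType) : String → Option GType :=
  fun a => (as.zip ts).lookup a

/-- Apply a type substitution to a type. -/
def substT (η : String → Option GType) : GType → GType
  | .tvar a => (η a).getD (.tvar a)
  | .named t args => .named t (args.attach.map fun ⟨τ, hτ⟩ => substT η τ)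
decreasing_by
  all_goals simp_wf
  all_goals (have h := List.sizeOf_lt_of_mem hτ; omega)

/-- Apply a type substitution to all types occurring in an expression. -/
def substTE (η : String → Option GType) : GExpr → GExpr
  | .var x => .var x
  | .call e m targs args =>
      .call (substTE η e) m (targs.map (substT η))
        (args.attach.map fun ⟨a, ha⟩ => substTE η a)
  | .lit τ args => .lit (substT η τ) (args.attach.map fun ⟨a, ha⟩ => substTE η a)
  | .select e f => .select (substTE η e) f
  | .assert e τ => .assert (substTE η e) (substT η τ)
decreasing_by
  all_goals simp_wf
  all_goals try (have h := List.sizeOf_lt_of_mem ha; omega)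
  all_goals omega

/-- Substitution map of expressions for term variables. -/
def mkVSubst (xs : List String) (vs : List GExpr) : String → Option GExpr :=
  fun x => (xs.zip vs).lookup x

/-- Apply a substitution of expressions for term variables. -/
def substVE (σ : String → Option GExpr) : GExpr → GExpr
  | .var x => (σ x).getD (.var x)
  | .call e m targs args =>
      .call (substVE σ e) m targs (args.attach.map fun ⟨a, ha⟩ => substVE σ a)
  | .lit τ args => .lit τ (args.attach.map fun ⟨a, ha⟩ => substVE σ a)
  | .select e f => .select (substVE σ e) f
  | .assert e τ => .assert (substVE σ e) τ
decreasing_by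
  all_goals simp_wf
  all_goals try (have h := List.sizeOf_lt_of_mem ha; omega)
  all_goals omega

/-- An FGG program, presented abstractly by its declarations: `formals` gives
the type formals of a declared type name, `fields` gives the (instantiated)
fields of a structure instance, `methods` gives the (instantiated) method
specifications of a named type instance, and `body` gives the (instantiated)
receiver, parameters, return type and body of a method instance. -/
structure GProgram where
  formals : TypeName → Option (List (String × GType))
  fields : String → List GType → Option (List (String × GType))
  methods : TypeName → List GType → Set GMethodSpec
  body : String → List GType → String → List GType →
    Option (String × List (String × GType) × GType × GExpr)

/-- `bounds_Δ(τ)`: a type parameter goes to its declared bound, other types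
are unchanged. -/
def boundsOf (Δ : List (String × GType)) : GType → Option GType
  | .tvar a => Δ.lookup a
  | τ => some τ

/-- `methods_Δ(τ)`: methods of a named type, or of the bound of a type
parameter. -/
def methodsD (P : GProgram) (Δ : List (String × GType)) : GType → Set GMethodSpec
  | .tvar a =>
    match Δ.lookup a with
    | some (.named t args) => P.methods t args
    | _ => ∅
  | .named t args => P.methods t args

/-- The FGG implements relation `Δ ⊢ τ <: σ`. -/
inductive GImp (P : GProgram) (Δ : List (String × GType)) : GType → GType → Prop
  | param (a : String) : GImp P Δ (.tvar a) (.tvar a)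
  | strct (s : String) (args : List GType) :
      GImp P Δ (.named (.strct s) args) (.named (.strct s) args)
  | iface {τ : GType} {i : String} {args : List GType} :
      methodsD P Δ (.named (.iface i) args) ⊆ methodsD P Δ τ →
      GImp P Δ τ (.named (.iface i) args)

/-- Well-formed FGG types `Δ ⊢ τ ok`. -/
inductive GWfType (P : GProgram) (Δ : List (String × GType)) : GType → Prop
  | param {a τI} : Δ.lookup a = some τI → GWfType P Δ (.tvar a)
  | named {t args Φ} :
      (∀ τ ∈ args, GWfType P Δ τ) →
      P.formals t = some Φ →
      args.length = Φ.length →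
      List.Forall₂
        (fun τ bound => GImp P Δ τ (substT (mkTSubst (Φ.map Prod.fst) args) bound))
        args (Φ.map Prod.snd) →
      GWfType P Δ (.named t args)

/-- FGG values. -/
inductive GIsValue : GExpr → Prop
  | lit {s sargs args} :
      (∀ e ∈ args, GIsValue e) → GIsValue (.lit (.named (.strct s) sargs) args)

def gtypeOf : GExpr → Option GType
  | .lit τ _ => some τ
  | _ => none

/-- Interface-like types: type parameters and interface types. -/
def GType.isIfaceLike : GType → Prop
  | .tvar _ => True
  | .named (.iface _) _ => True
  | _ => False

def GType.isStructType : GType → Prop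
  | .named (.strct _) _ => True
  | _ => False

/-- Environment built from a list of bindings. -/
def mkCtxG (l : List (String × GType)) : String → Option GType :=
  fun x => l.lookup x

/-- The FGG typing judgment `Δ ; Γ ⊢ e : τ`. -/
inductive GHasType (P : GProgram) :
    List (String × GType) → (String → Option GType) → GExpr → GType → Prop
  | var {Δ Γ x τ} : Γ x = some τ → GHasType P Δ Γ (.var x) τ
  | call {Δ Γ e m targs args τr Ψ params ret τs} :
      GHasType P Δ Γ e τr →
      GMethodSpec.mk m ⟨Ψ, params, ret⟩ ∈ methodsD P Δ τr →
      targs.length = Ψ.length →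
      List.Forall₂
        (fun ta bd => GImp P Δ ta (substT (mkTSubst (Ψ.map Prod.fst) targs) bd))
        targs (Ψ.map Prod.snd) →
      List.Forall₂ (GHasType P Δ Γ) args τs →
      List.Forall₂
        (fun τ σ => GImp P Δ τ (substT (mkTSubst (Ψ.map Prod.fst) targs) σ))
        τs (params.map Prod.snd) →
      GHasType P Δ Γ (.call e m targs args)
        (substT (mkTSubst (Ψ.map Prod.fst) targs) ret)
  | lit {Δ Γ s sargs args τs flds} :
      GWfType P Δ (.named (.strct s) sargs) →
      P.fields s sargs = some flds →
      List.Forall₂ (GHasType P Δ Γ) args τs →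
      List.Forall₂ (GImp P Δ) τs (flds.map Prod.snd) →
      GHasType P Δ Γ (.lit (.named (.strct s) sargs) args) (.named (.strct s) sargs)
  | select {Δ Γ e s sargs flds f τ} :
      GHasType P Δ Γ e (.named (.strct s) sargs) →
      P.fields s sargs = some flds →
      (f, τ) ∈ flds →
      GHasType P Δ Γ (.select e f) τ
  | assertI {Δ Γ e τJ σJ} :
      GWfType P Δ τJ → τJ.isIfaceLike →
      GHasType P Δ Γ e σJ → σJ.isIfaceLike →
      GHasType P Δ Γ (.assert e τJ) τJ
  | assertS {Δ Γ e s sargs σJ b} :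
      GWfType P Δ (.named (.strct s) sargs) →
      GHasType P Δ Γ e σJ → σJ.isIfaceLike →
      boundsOf Δ σJ = some b →
      GImp P Δ (.named (.strct s) sargs) b →
      GHasType P Δ Γ (.assert e (.named (.strct s) sargs)) (.named (.strct s) sargs)
  | stupid {Δ Γ e τ σ} :
      GWfType P Δ τ →
      GHasType P Δ Γ e σ → σ.isStructType →
      GHasType P Δ Γ (.assert e τ) τ

/-- FGG reduction `d ⟶ e`. -/
inductive GStep (P : GProgram) : GExpr → GExpr → Prop
  | field {s sargs args flds f τ v} {i : Nat} :
      (∀ e ∈ args, GIsValue e) →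
      P.fields s sargs = some flds →
      flds[i]? = some (f, τ) →
      args[i]? = some v →
      GStep P (.select (.lit (.named (.strct s) sargs) args) f) v
  | call {s sargs vargs m targs args x params ret e} :
      GIsValue (.lit (.named (.strct s) sargs) vargs) →
      (∀ a ∈ args, GIsValue a) →
      P.body s sargs m targs = some (x, params, ret, e) →
      GStep P (.call (.lit (.named (.strct s) sargs) vargs) m targs args)
        (substVE (mkVSubst (x :: params.map Prod.fst)
          (.lit (.named (.strct s) sargs) vargs :: args)) e)
  | assert {v τ τv} :
      GIsValue v → gtypeOf v = some τv → GImp P [] τv τ →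
      GStep P (.assert v τ) v
  | ctx_recv {e e' m targs args} :
      GStep P e e' → GStep P (.call e m targs args) (.call e' m targs args)
  | ctx_arg {v m targs vs a a' es} :
      GIsValue v → (∀ e ∈ vs, GIsValue e) → GStep P a a' →
      GStep P (.call v m targs (vs ++ a :: es)) (.call v m targs (vs ++ a' :: es))
  | ctx_lit {τ vs a a' es} :
      (∀ e ∈ vs, GIsValue e) → GStep P a a' →
      GStep P (.lit τ (vs ++ a :: es)) (.lit τ (vs ++ a' :: es))
  | ctx_select {e e' f} : GStep P e e' → GStep P (.select e f) (.select e' f)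
  | ctx_assert {e e' τ} : GStep P e e' → GStep P (.assert e τ) (.assert e' τ)

/-- `d` panics in FGG: `d = E[v.(τ)]` with `¬ ∅ ⊢ type(v) <: τ`. -/
inductive GPanics (P : GProgram) : GExpr → Prop
  | cast {v τ τv} :
      GIsValue v → gtypeOf v = some τv → ¬ GImp P [] τv τ →
      GPanics P (.assert v τ)
  | lit {τ vs a es} :
      (∀ e ∈ vs, GIsValue e) → GPanics P a → GPanics P (.lit τ (vs ++ a :: es))
  | recv {e m targs args} : GPanics P e → GPanics P (.call e m targs args)
  | arg {v m targs vs a es} :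
      GIsValue v → (∀ e ∈ vs, GIsValue e) → GPanics P a →
      GPanics P (.call v m targs (vs ++ a :: es))
  | select {e f} : GPanics P e → GPanics P (.select e f)
  | assert {e τ} : GPanics P e → GPanics P (.assert e τ)

/-- Well-formedness of an FGG program. -/
structure GProgram.Wf (P : GProgram) : Prop where
  fields_wf : ∀ s sargs flds, P.fields s sargs = some flds →
      ∀ p ∈ flds, GWfType P [] p.2
  body_typed : ∀ s sargs m targs x params ret e,
      P.body s sargs m targs = some (x, params, ret, e) →
      ∃ τ, GHasType P [] (mkCtxG ((x, GType.named (.strct s) sargs) :: params)) e τ ∧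
        GImp P [] τ ret
  body_methods : ∀ s sargs m targs x params ret e,
      P.body s sargs m targs = some (x, params, ret, e) →
      ∃ Ψ params₀ ret₀,
        GMethodSpec.mk m ⟨Ψ, params₀, ret₀⟩ ∈ P.methods (.strct s) sargs ∧
        params = params₀.map
          (fun p => (p.1, substT (mkTSubst (Ψ.map Prod.fst) targs) p.2)) ∧
        ret = substT (mkTSubst (Ψ.map Prod.fst) targs) ret₀
  methods_body : ∀ s sargs m Ψ params ret,
      GMethodSpec.mk m ⟨Ψ, params, ret⟩ ∈ P.methods (.strct s) sargs →
      ∀ targs : List GType, targs.length = Ψ.length →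
      ∃ x e, P.body s sargs m targs =
        some (x,
          params.map (fun p => (p.1, substT (mkTSubst (Ψ.map Prod.fst) targs) p.2)),
          substT (mkTSubst (Ψ.map Prod.fst) targs) ret, e)

end FGPaper

/-! ## Instance sets and monomorphisation -/

namespace FGPaper

/-- Elements of instance sets: a type `τ`, or a method instance `τ.m(ψ)`. -/
inductive Instance where
  | ty (τ : GType)
  | meth (τ : GType) (m : String) (ψ : List GType)

/-- The instance-collection judgment `Δ ; Γ ⊢ e ▸ ω`. -/
inductive Collect (P : GProgram) (Δ : List (String × GType))
    (Γ : String → Option GType) : GExpr → Set Instance → Prop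
  | var {x} : Collect P Δ Γ (.var x) ∅
  | lit {τS args ωs} :
      List.Forall₂ (Collect P Δ Γ) args ωs →
      Collect P Δ Γ (.lit τS args)
        (insert (Instance.ty τS) {i | ∃ ω ∈ ωs, i ∈ ω})
  | select {e f ω} : Collect P Δ Γ e ω → Collect P Δ Γ (.select e f) ω
  | assert {e τ ω} :
      Collect P Δ Γ e ω → Collect P Δ Γ (.assert e τ) (insert (Instance.ty τ) ω)
  | call {e m ψ args τ ω ωs} :
      GHasType P Δ Γ e τ →
      Collect P Δ Γ e ω →
      List.Forall₂ (Collect P Δ Γ) args ωs →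
      Collect P Δ Γ (.call e m ψ args)
        (insert (Instance.ty τ) (insert (Instance.meth τ m ψ)
          (ω ∪ {i | ∃ ω' ∈ ωs, i ∈ ω'})))

def isIfaceGType : GType → Prop
  | .named (.iface _) _ => True
  | _ => False

/-- `F-ext`: field types of structure instances in `ω`. -/
def Fext (P : GProgram) (ω : Set Instance) : Set Instance :=
  {i | ∃ s sargs flds p, Instance.ty (.named (.strct s) sargs) ∈ ω ∧
        P.fields s sargs = some flds ∧ p ∈ flds ∧ i = .ty p.2}

/-- `M-ext`: types occurring in signatures of method instances in `ω`. -/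
def Mext (P : GProgram) (Δ : List (String × GType)) (ω : Set Instance) :
    Set Instance :=
  {i | ∃ τ m ψ Ψ params ret, Instance.meth τ m ψ ∈ ω ∧
        GMethodSpec.mk m ⟨Ψ, params, ret⟩ ∈ methodsD P Δ τ ∧
        ((∃ p ∈ params, i = .ty (substT (mkTSubst (Ψ.map Prod.fst) ψ) p.2)) ∨
          i = .ty (substT (mkTSubst (Ψ.map Prod.fst) ψ) ret))}

/-- `I-ext`: propagate method instances along subtyping between interfaces. -/
def Iext (P : GProgram) (Δ : List (String × GType)) (ω : Set Instance) :
    Set Instance :=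
  {i | ∃ τI τI' m ψ, Instance.meth τI m ψ ∈ ω ∧ isIfaceGType τI ∧
        Instance.ty τI' ∈ ω ∧ isIfaceGType τI' ∧ GImp P Δ τI' τI ∧
        i = .meth τI' m ψ}

/-- `S-ext`: instances required by bodies of implementations of called
methods. -/
def Sext (P : GProgram) (Δ : List (String × GType)) (ω : Set Instance) :
    Set Instance :=
  {i | ∃ τ m ψ s sargs x params ret e Ω',
        Instance.meth τ m ψ ∈ ω ∧
        Instance.ty (.named (.strct s) sargs) ∈ ω ∧
        GImp P Δ (.named (.strct s) sargs) τ ∧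
        P.body s sargs m ψ = some (x, params, ret, e) ∧
        Collect P Δ (mkCtxG ((x, GType.named (.strct s) sargs) :: params)) e Ω' ∧
        (i = .meth (.named (.strct s) sargs) m ψ ∨ i ∈ Ω')}

/-- The closure operator `G_Δ(ω)`. -/
def Gext (P : GProgram) (Δ : List (String × GType)) (ω : Set Instance) :
    Set Instance :=
  ω ∪ Fext P ω ∪ Mext P Δ ω ∪ Iext P Δ ω ∪ Sext P Δ ω

/-- The instance set of a program with main-body instance set `ω`:
`Ω = lim_{n→∞} G_∅ⁿ(ω)`. -/
def InstSet (P : GProgram) (ω : Set Instance) : Set Instance :=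
  ⋃ n : ℕ, (fun s => Gext P [] s)^[n] ω

/-- The FG method sets produced by monomorphising the instance set `Ω`:
for each type instance `τ ∈ Ω` with FG name `monoName τ`, a dummy method
(named by `hash`, with no parameters and return type `topName`) for every
FGG method of `τ`, together with the monomorphised instance of every method
instance `τ.m(ψ) ∈ Ω`. -/
def monoFGMethods (P : GProgram) (Ω : Set Instance) (monoName : GType → TypeName)
    (monoMeth : String → List GType → String) (hash : GMethodSpec → String)
    (topName : TypeName) : TypeName → Set MethodSpec := fun t =>
  {S | ∃ τ, Instance.ty τ ∈ Ω ∧ monoName τ = t ∧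
      ((∃ spec ∈ methodsD P [] τ, S = ⟨hash spec, ⟨[], topName⟩⟩) ∨
        (∃ m Ψ params ret ψ,
          GMethodSpec.mk m ⟨Ψ, params, ret⟩ ∈ methodsD P [] τ ∧
          Instance.meth τ m ψ ∈ Ω ∧
          S = ⟨monoMeth m ψ,
            ⟨params.map (fun p =>
                (p.1, monoName (substT (mkTSubst (Ψ.map Prod.fst) ψ) p.2))),
              monoName (substT (mkTSubst (Ψ.map Prod.fst) ψ) ret)⟩⟩))}

end FGPaper


namespace FGPaper

theorem Imp.rfl' (M) (t : TypeName) : Imp M t t := by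
  cases t with
  | strct s => exact .strct s
  | iface i => exact .iface (subset_refl _)

theorem Imp.trans' {M} {a b c} (h1 : Imp M a b) (h2 : Imp M b c) : Imp M a c := by
  cases h2 with
  | strct s => exact h1
  | iface hsub =>
    cases h1 with
    | strct s => exact .iface hsub
    | iface hsub2 => exact .iface (Set.Subset.trans hsub hsub2)

theorem Imp.methods_subset {M} {a b} (h : Imp M a b) : M b ⊆ M a := by
  cases h with
  | strct s => exact subset_refl _
  | iface hsub => exact hsub

theorem value_strct {P Γ v t} (hv : IsValue v) (ht : HasType P Γ v t) :
    ∃ s, t = .strct s := by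
  cases hv; cases ht; exact ⟨_, rfl⟩

theorem lookup_aux (P : FGProgram) :
    ∀ (xs : List String) (vs : List Expr) (ts us : List TypeName),
    List.Forall₂ (HasType P (fun _ => none)) vs ts →
    List.Forall₂ (Imp P.methods) ts us →
    ∀ x u, (xs.zip us).lookup x = some u →
    ∃ v t, (xs.zip vs).lookup x = some v ∧ v ∈ vs ∧
      HasType P (fun _ => none) v t ∧ Imp P.methods t u := by
  intro xs
  induction xs with
  | nil => intro _ _ _ _ _ x u h; simp [List.lookup] at h
  | cons x0 xs' ih =>
    intro vs ts us hvt hsub x u h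
    cases hsub with
    | nil => simp [List.lookup] at h
    | @cons t0 u0 ts' us' himp hsub' =>
      cases hvt with
      | @cons v0 _ vs' _ hht hvt' =>
        rw [List.zip_cons_cons] at h
        rw [List.zip_cons_cons]
        by_cases hx : x = x0
        · subst hx
          have hb : (x == x) = true := beq_self_eq_true x
          simp only [List.lookup, hb, Option.some.injEq] at h
          subst h
          exact ⟨v0, t0, by simp [List.lookup, hb], List.mem_cons_self, hht, himp⟩
        · have hb : (x == x0) = false := beq_eq_false_iff_ne.mpr hx
          simp only [List.lookup, hb] at h
          obtain ⟨v, t, h1, h2, h3, h4⟩ := ih vs' ts' us' hvt' hsub' x u h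
          exact ⟨v, t, by simp [List.lookup, hb, h1], List.mem_cons_of_mem _ h2, h3, h4⟩

theorem substE_call (σ e m args) : substE σ (.call e m args) =
    .call (substE σ e) m (args.map (substE σ)) := by
  simp [substE]

theorem substE_select (σ e f) : substE σ (.select e f) = .select (substE σ e) f := by
  simp [substE]

theorem substE_assert (σ e t) : substE σ (.assert e t) = .assert (substE σ e) t := by
  simp [substE]

theorem substE_lit (σ t args) : substE σ (.lit t args) =
    .lit t (args.map (substE σ)) := by
  simp [substE]

/-- transitive composition of Forall₂ Imp -/
theorem forall2_imp_trans {M} : ∀ {l1 l2 l3 : List TypeName},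
    List.Forall₂ (Imp M) l1 l2 → List.Forall₂ (Imp M) l2 l3 →
    List.Forall₂ (Imp M) l1 l3 := by
  intro l1 l2 l3 h1 h2
  induction h1 generalizing l3 with
  | nil => cases h2; exact .nil
  | cons h hs ih =>
    cases h2 with
    | cons h' hs' => exact .cons (Imp.trans' h h') (ih hs')

theorem subst_main (P : FGProgram)
    (xs : List String) (vs : List Expr) (ts us : List TypeName)
    (hv : ∀ v ∈ vs, IsValue v)
    (hvt : List.Forall₂ (HasType P (fun _ => none)) vs ts)
    (hsub : List.Forall₂ (Imp P.methods) ts us) :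
    ∀ (n : ℕ) (e : Expr), sizeOf e ≤ n → ∀ (u : TypeName),
      HasType P (mkCtx (xs.zip us)) e u →
    ∃ t, HasType P (fun _ => none) (substE (mkSubst xs vs) e) t ∧
      Imp P.methods t u ∧ (t = u ∨ ∃ s, t = .strct s) := by
  intro n
  induction n with
  | zero => intro e h; cases e <;> simp at h
  | succ n ih =>
    intro e hsize u he
    -- helper for argument lists
    have key : ∀ {args : List Expr} {ts0 : List TypeName},
        (∀ a ∈ args, sizeOf a ≤ n) →
        List.Forall₂ (HasType P (mkCtx (xs.zip us))) args ts0 →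
        ∃ ts', List.Forall₂ (HasType P (fun _ => none))
            (args.map (substE (mkSubst xs vs))) ts' ∧
          List.Forall₂ (Imp P.methods) ts' ts0 := by
      intro args ts0 hsz h
      induction h with
      | nil => exact ⟨[], .nil, .nil⟩
      | @cons a t0 args' ts0' ha hrest ih2 =>
        obtain ⟨ts', h1, h2⟩ := ih2 (fun a ha => hsz a (List.mem_cons_of_mem _ ha))
        obtain ⟨t', ht1, ht2, _⟩ := ih a (hsz a (List.mem_cons_self)) t0 ha
        exact ⟨t' :: ts', .cons ht1 h1, .cons ht2 h2⟩
    cases he with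
    | var hx =>
      obtain ⟨v, t, h1, h2, h3, h4⟩ := lookup_aux P xs vs ts us hvt hsub _ u hx
      obtain ⟨s, hs⟩ := value_strct (hv v h2) h3
      refine ⟨t, ?_, h4, Or.inr ⟨s, hs⟩⟩
      simp only [substE, mkSubst] at *
      rw [h1]
      exact h3
    | @call e0 m args t params ret ts0 hrecv hmem hargs himps =>
      have hsz : sizeOf e0 ≤ n ∧ ∀ a ∈ args, sizeOf a ≤ n := by
        simp only [Expr.call.sizeOf_spec] at hsize
        constructor
        · omega
        · intro a ha; have := List.sizeOf_lt_of_mem ha; omega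
      obtain ⟨t0, hr1, hr2, _⟩ := ih e0 hsz.1 t hrecv
      obtain ⟨ts', ha1, ha2⟩ := key hsz.2 hargs
      rw [substE_call]
      exact ⟨u, .call hr1 (Imp.methods_subset hr2 hmem) ha1
        (forall2_imp_trans ha2 himps), Imp.rfl' _ _, Or.inl rfl⟩
    | @lit s args ts0 flds hdecl hflds hargs himps =>
      have hsz : ∀ a ∈ args, sizeOf a ≤ n := by
        simp only [Expr.lit.sizeOf_spec] at hsize
        intro a ha; have := List.sizeOf_lt_of_mem ha; omega
      obtain ⟨ts', ha1, ha2⟩ := key hsz hargs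
      rw [substE_lit]
      exact ⟨.strct s, .lit hdecl hflds ha1 (forall2_imp_trans ha2 himps),
        Imp.rfl' _ _, Or.inl rfl⟩
    | @select e0 s flds f u' hrecv hflds hf =>
      have hsz : sizeOf e0 ≤ n := by
        simp only [Expr.select.sizeOf_spec] at hsize; omega
      obtain ⟨t0, hr1, hr2, _⟩ := ih e0 hsz _ hrecv
      rw [substE_select]
      cases hr2 with
      | strct _ =>
        exact ⟨u, .select hr1 hflds hf, Imp.rfl' _ _, Or.inl rfl⟩
    | @assertI e0 i u0 hdecl hrecv =>
      have hsz : sizeOf e0 ≤ n := by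
        simp only [Expr.assert.sizeOf_spec] at hsize; omega
      obtain ⟨t0, hr1, hr2, heq⟩ := ih e0 hsz _ hrecv
      rw [substE_assert]
      rcases heq with rfl | ⟨s, rfl⟩
      · exact ⟨.iface i, .assertI hdecl hr1, Imp.rfl' _ _, Or.inl rfl⟩
      · exact ⟨.iface i, .stupid hdecl hr1, Imp.rfl' _ _, Or.inl rfl⟩
    | @assertS e0 s u0 hdecl hrecv himp =>
      have hsz : sizeOf e0 ≤ n := by
        simp only [Expr.assert.sizeOf_spec] at hsize; omega
      obtain ⟨t0, hr1, hr2, heq⟩ := ih e0 hsz _ hrecv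
      rw [substE_assert]
      rcases heq with rfl | ⟨s', rfl⟩
      · exact ⟨.strct s, .assertS hdecl hr1 himp, Imp.rfl' _ _, Or.inl rfl⟩
      · exact ⟨.strct s, .stupid hdecl hr1, Imp.rfl' _ _, Or.inl rfl⟩
    | @stupid e0 t' s hdecl hrecv =>
      have hsz : sizeOf e0 ≤ n := by
        simp only [Expr.assert.sizeOf_spec] at hsize; omega
      obtain ⟨t0, hr1, hr2, _⟩ := ih e0 hsz _ hrecv
      rw [substE_assert]
      cases hr2 with
      | strct _ =>
        exact ⟨u, .stupid hdecl hr1, Imp.rfl' _ _, Or.inl rfl⟩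


/-- Substitution lemma for FG. -/
theorem substitution (P : FGProgram)
    (xs : List String) (vs : List Expr) (ts us : List TypeName)
    (hv : ∀ v ∈ vs, IsValue v)
    (hvt : List.Forall₂ (HasType P (fun _ => none)) vs ts)
    (hsub : List.Forall₂ (Imp P.methods) ts us)
    (e : Expr) (u : TypeName)
    (he : HasType P (mkCtx (xs.zip us)) e u) :
    ∃ t, HasType P (fun _ => none) (substE (mkSubst xs vs) e) t ∧
      Imp P.methods t u := by
  obtain ⟨t, h1, h2, _⟩ :=
    subst_main P xs vs ts us hv hvt hsub (sizeOf e) e le_rfl u he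
  exact ⟨t, h1, h2⟩

end FGPaper
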